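/- Let 1 ≤ k ≤ n and let γ, δ ∈ ℕ satisfy γ + s·δ < s·(n − k + 1). Then for every tuple V = (V^(1), …, V^(ℓ)) of GF(q)-subspaces of F^(s+1), the number of message matrices M ∈ F^(s×k) such that the lifted codeword tuple U(M) is (γ, δ)-reachable from V is at most q^(m·k·(s−1)). -/

import Mathlib

/-!
Skew polynomials `f = ∑ fⱼ Xʲ` of `F[X; σ]` act on `F` through `f(D_a) = ∑ fⱼ D_aʲ`, where
`D_a b = σ(b) a`, and `(f g)(D_a) = f(D_a) ∘ g(D_a)`. Splitting off linear right factors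
`X - σ(b) a b⁻¹` shows that a nonzero `f` has `∑ᵢ dim ker f(D_{aᵢ}) ≤ deg f` when the `aᵢ` are
pairwise non-σ-conjugate and `σ` has fixed field `GF(q)`.

Since `n - δ + s (n - δ + 1 - k) > n - δ + γ = ∑ᵢ dim V⁽ⁱ⁾`, some nonzero `Q = (Q₀, …, Q_s)` with
`deg Q₀ < n - δ` and `deg Q_r < n - δ + 1 - k` kills every `V⁽ⁱ⁾` under
`v ↦ ∑ₜ Qₜ(D_{aᵢ})(vₜ)`. If `U(M)` is reachable from `V`, the spaces `W⁽ⁱ⁾ ⊆ U⁽ⁱ⁾ ∩ V⁽ⁱ⁾` have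
total dimension `n - δ` and consist of vectors `(b, f₁(b), …, f_s(b))` with `f_r` the message
polynomials of `M`; so `Q₀ + ∑ Q_r f_r` has roots of total dimension `n - δ` but degree `< n - δ`,
hence vanishes. For `r` with `Q_r ≠ 0`, the absence of zero divisors in `F[X; σ]` shows that the
row `M_r` is determined by the other rows, leaving at most `q^(m k (s - 1))` matrices.
-/

namespace Stmt17

/-- `genNorm σ a i = σ^(i-1)(a) ⋯ σ(a) · a`, the generalized power function `N_i(a)`. -/
def genNorm {F : Type} [Field F] (σ : F ≃+* F) (a : F) : ℕ → F
  | 0 => 1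
  | i + 1 => (⇑σ)^[i] a * genNorm σ a i

/-- Generalized operator `D_a^i(b) = σ^i(b) · N_i(a)` for `i ∈ ℕ`. -/
def opev {F : Type} [Field F] (σ : F ≃+* F) (a b : F) (i : ℕ) : F :=
  (⇑σ)^[i] b * genNorm σ a i

/-- `b` is σ-conjugate to `a`, i.e. `b = σ(c)·a·c⁻¹` for some nonzero `c`. -/
def SConj {F : Type} [Field F] (σ : F ≃+* F) (a b : F) : Prop :=
  ∃ c : F, c ≠ 0 ∧ b = σ c * a * c⁻¹

/-- σ-generalized Moore matrix `λ_d(x)_a⃗` w.r.t. the length partition `nn`: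
its row `r` applies `D_{a_i}^r` entrywise to the `i`-th block of `x`. -/
def moore {F : Type} [Field F] (σ : F ≃+* F) {ℓ : ℕ} (nn : Fin ℓ → ℕ) (aa : Fin ℓ → F)
    (d : ℕ) (x : (Σ i : Fin ℓ, Fin (nn i)) → F) :
    Matrix (Fin d) (Σ i : Fin ℓ, Fin (nn i)) F :=
  Matrix.of fun r p => opev σ (aa p.1) (x p) (r : ℕ)

/-- `λ_d(X)_a⃗` for a matrix `X`: the stack of `λ_d(x_j)_a⃗` over the rows of `X`. -/
def mooreMat {F : Type} [Field F] (σ : F ≃+* F) {ℓ : ℕ} (nn : Fin ℓ → ℕ) (aa : Fin ℓ → F)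
    {s : ℕ} (d : ℕ) (X : Matrix (Fin s) (Σ i : Fin ℓ, Fin (nn i)) F) :
    Matrix (Fin s × Fin d) (Σ i : Fin ℓ, Fin (nn i)) F :=
  Matrix.of fun r p => opev σ (aa p.1) (X r.1 p) (r.2 : ℕ)

/-- `rk_q` of a vector: the `K`-dimension of the `K`-span of its entries. -/
noncomputable def rkq (K : Type) [Field K] {F : Type} [Field F] [Algebra K F] {ι : Type}
    (v : ι → F) : ℕ :=
  Module.finrank K (Submodule.span K (Set.range v))

/-- `rk_q` of a matrix: the `K`-dimension of the `K`-span of its columns. -/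
noncomputable def rkqMat (K : Type) [Field K] {F : Type} [Field F] [Algebra K F]
    {s : ℕ} {ι : Type} (X : Matrix (Fin s) ι F) : ℕ :=
  Module.finrank K (Submodule.span K (Set.range fun j : ι => fun r : Fin s => X r j))

/-- Sum-rank weight of a blockwise vector. -/
noncomputable def wtV (K : Type) [Field K] {F : Type} [Field F] [Algebra K F] {ℓ : ℕ}
    (nn : Fin ℓ → ℕ) (x : (Σ i : Fin ℓ, Fin (nn i)) → F) : ℕ :=
  ∑ i, rkq K fun μ : Fin (nn i) => x ⟨i, μ⟩

/-- Sum-rank weight of a blockwise matrix. -/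
noncomputable def wtM (K : Type) [Field K] {F : Type} [Field F] [Algebra K F] {s ℓ : ℕ}
    (nn : Fin ℓ → ℕ) (X : Matrix (Fin s) (Σ i : Fin ℓ, Fin (nn i)) F) : ℕ :=
  ∑ i, rkqMat K (Matrix.of fun (r : Fin s) (μ : Fin (nn i)) => X r ⟨i, μ⟩)

/-- Codeword `C(M) = M · λ_k(β)_a⃗` of the `s`-interleaved linearized Reed–Solomon code. -/
def codeword {F : Type} [Field F] (σ : F ≃+* F) {ℓ : ℕ} (nn : Fin ℓ → ℕ) (aa : Fin ℓ → F)
    (β : (Σ i : Fin ℓ, Fin (nn i)) → F) {s : ℕ} (k : ℕ) (M : Matrix (Fin s) (Fin k) F) :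
    Matrix (Fin s) (Σ i : Fin ℓ, Fin (nn i)) F :=
  M * moore σ nn aa k β

/-- The `i`-th component subspace of the lifted codeword of `M`: the `K`-span in
`F^{s+1}` of the `n_i` vectors `(β^(i)_μ, C(M)^(i)_{1,μ}, …, C(M)^(i)_{s,μ})`. -/
noncomputable def liftSp (K : Type) [Field K] {F : Type} [Field F] [Algebra K F]
    (σ : F ≃+* F) {ℓ : ℕ} (nn : Fin ℓ → ℕ) (aa : Fin ℓ → F)
    (β : (Σ i : Fin ℓ, Fin (nn i)) → F) {s : ℕ} (k : ℕ)
    (M : Matrix (Fin s) (Fin k) F) (i : Fin ℓ) : Submodule K (Fin (s + 1) → F) :=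
  Submodule.span K (Set.range fun μ : Fin (nn i) =>
    Fin.cons (β ⟨i, μ⟩) fun j : Fin s => codeword σ nn aa β k M j ⟨i, μ⟩)

open Polynomial Module

lemma finrank_ker_comp_le {K U V W : Type*} [Field K] [AddCommGroup U] [Module K U]
    [AddCommGroup V] [Module K V] [AddCommGroup W] [Module K W] [FiniteDimensional K V]
    [FiniteDimensional K W] (φ : W →ₗ[K] U) (ψ : V →ₗ[K] W) :
    finrank K (LinearMap.ker (φ ∘ₗ ψ))
      ≤ finrank K (LinearMap.ker φ) + finrank K (LinearMap.ker ψ) := by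
  set κ := LinearMap.ker (φ ∘ₗ ψ)
  have hrange : LinearMap.range (ψ.domRestrict κ) ≤ LinearMap.ker φ := by
    rintro _ ⟨x, rfl⟩
    exact x.2
  have hker : (LinearMap.ker (ψ.domRestrict κ)).map κ.subtype ≤ LinearMap.ker ψ := by
    rintro _ ⟨x, hx, rfl⟩
    exact hx
  have hrankNullity := (ψ.domRestrict κ).finrank_range_add_finrank_ker
  have hrange' := Submodule.finrank_mono hrange
  have hker' := Submodule.finrank_mono hker
  rw [Submodule.finrank_map_subtype_eq] at hker'
  omega

lemma sum_finrank_add_eq_of_le {K E ι : Type*} [Field K] [AddCommGroup E] [Module K E]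
    [FiniteDimensional K E] [Fintype ι] {U W : ι → Submodule K E} (hWU : ∀ i, W i ≤ U i) {δ : ℕ}
    (hδ : ∑ i, (finrank K (U i) - finrank K (W i)) = δ) :
    ∑ i, finrank K (W i) + δ = ∑ i, finrank K (U i) := by
  rw [← hδ, ← Finset.sum_add_distrib]
  exact Finset.sum_congr rfl fun i _ => Nat.add_sub_of_le (Submodule.finrank_mono (hWU i))

lemma sum_finrank_eq_of_eq_sup {K E ι : Type*} [Field K] [AddCommGroup E] [Module K E]
    [FiniteDimensional K E] [Fintype ι] {V W E' : ι → Submodule K E} (h : ∀ i, W i ⊓ E' i = ⊥)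
    (hV : ∀ i, V i = W i ⊔ E' i) :
    ∑ i, finrank K (V i) = ∑ i, finrank K (W i) + ∑ i, finrank K (E' i) := by
  rw [← Finset.sum_add_distrib]
  refine Finset.sum_congr rfl fun i _ => ?_
  have := Submodule.finrank_sup_add_finrank_inf_eq (W i) (E' i)
  rwa [h i, finrank_bot, add_zero, ← hV i] at this

def IsReachable {K E ι : Type*} [Field K] [AddCommGroup E] [Module K E] [Fintype ι]
    (U V : ι → Submodule K E) (γ δ : ℕ) : Prop :=
  ∃ W E' : ι → Submodule K E,
    (∀ i, W i ≤ U i) ∧ (∀ i, W i ⊓ E' i = ⊥) ∧ (∀ i, V i = W i ⊔ E' i) ∧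
    (∑ i, (finrank K (U i) - finrank K (W i))) = δ ∧ (∑ i, finrank K (E' i)) = γ

lemma IsReachable.sum_finrank_add {K E ι : Type*} [Field K] [AddCommGroup E] [Module K E]
    [FiniteDimensional K E] [Fintype ι] {U V : ι → Submodule K E} {γ δ : ℕ}
    (h : IsReachable U V γ δ) : ∑ i, finrank K (V i) + δ = ∑ i, finrank K (U i) + γ := by
  obtain ⟨W, E', hWU, hWE, hV, hδ, hγ⟩ := h
  rw [sum_finrank_eq_of_eq_sup hWE hV, hγ, ← sum_finrank_add_eq_of_le hWU hδ]
  ring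

lemma natDegree_monomial_mul_map_le {R : Type*} [Semiring R] (j : ℕ) (c : R) (g : R[X])
    (φ : R →+* R) : (monomial j c * g.map φ).natDegree ≤ j + g.natDegree :=
  natDegree_mul_le.trans (add_le_add (natDegree_monomial_le c) natDegree_map_le)

section SkewPolynomial

variable {K F : Type} [Field K] [Field F] [Algebra K F] (σ : F ≃ₐ[K] F)

/-- The operator `D_a b = σ(b) a`; its powers are the paper's `D_a^i` (`opev_eq_twistOp_pow`). -/
noncomputable def twistOp (a : F) : Module.End K F := LinearMap.mulRight K a ∘ₗ σ.toLinearMap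

@[simp] lemma twistOp_apply (a b : F) : twistOp σ a b = σ b * a := rfl

lemma twistOp_pow_apply_mul (a c b : F) (j : ℕ) :
    (twistOp σ a ^ j) (c * b) = (σ ^ j) c * (twistOp σ a ^ j) b := by
  induction j generalizing b c with
  | zero => rfl
  | succ j ih =>
    rw [pow_succ, Module.End.mul_apply, Module.End.mul_apply, twistOp_apply, twistOp_apply,
      map_mul σ c b, mul_assoc, ih, pow_succ, AlgEquiv.mul_apply]

lemma twistOp_pow_mul_smul (a c : F) (j : ℕ) (φ : Module.End K F) :
    twistOp σ a ^ j * (c • φ) = (σ ^ j) c • (twistOp σ a ^ j * φ) := by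
  ext b
  exact twistOp_pow_apply_mul σ a c (φ b) j

/-- Elements `∑ fⱼ Xʲ` of the skew polynomial ring `F[X; σ]` are stored as ordinary polynomials;
`skewEval σ a f = ∑ fⱼ • D_aʲ` is the operator evaluation `f(D_a)`. -/
noncomputable def skewEval (a : F) : F[X] →ₗ[F] Module.End K F :=
  Polynomial.lsum fun j => LinearMap.smulRight LinearMap.id (twistOp σ a ^ j)

@[simp] lemma skewEval_monomial (a c : F) (j : ℕ) :
    skewEval σ a (monomial j c) = c • twistOp σ a ^ j := by
  simp [skewEval]

/-- The multiplication of `F[X; σ]`, determined by `X c = σ(c) X`. -/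
noncomputable def skewMul (f g : F[X]) : F[X] :=
  f.sum fun j c => monomial j c * g.map ((σ ^ j : F ≃ₐ[K] F) : F →+* F)

@[simp] lemma skewMul_zero_left (g : F[X]) : skewMul σ 0 g = 0 := sum_zero_index _

@[simp] lemma skewMul_zero_right (f : F[X]) : skewMul σ f 0 = 0 := by
  simp [skewMul, sum_def]

lemma skewMul_monomial_left (j : ℕ) (c : F) (g : F[X]) :
    skewMul σ (monomial j c) g = monomial j c * g.map ((σ ^ j : F ≃ₐ[K] F) : F →+* F) :=
  sum_monomial_index _ _ (by simp)

lemma skewMul_add_left (f f' g : F[X]) :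
    skewMul σ (f + f') g = skewMul σ f g + skewMul σ f' g :=
  sum_add_index _ _ _ (by simp) (by simp [add_mul])

lemma skewMul_add_right (f g g' : F[X]) :
    skewMul σ f (g + g') = skewMul σ f g + skewMul σ f g' := by
  simp only [skewMul, Polynomial.map_add, mul_add]
  exact sum_add _ _ _

lemma skewMul_sub_right (f g g' : F[X]) :
    skewMul σ f (g - g') = skewMul σ f g - skewMul σ f g' := by
  rw [eq_sub_iff_add_eq, ← skewMul_add_right, sub_add_cancel]

lemma skewEval_skewMul (a : F) (f g : F[X]) :
    skewEval σ a (skewMul σ f g) = skewEval σ a f * skewEval σ a g := by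
  induction f using Polynomial.induction_on' with
  | add f f' hf hf' => rw [skewMul_add_left, map_add, map_add, hf, hf', add_mul]
  | monomial j c =>
    rw [skewMul_monomial_left]
    induction g using Polynomial.induction_on' with
    | add g g' hg hg' => rw [Polynomial.map_add, mul_add, map_add, map_add, hg, hg', mul_add]
    | monomial j' c' =>
      rw [Polynomial.map_monomial, monomial_mul_monomial, skewEval_monomial, skewEval_monomial,
        skewEval_monomial, smul_mul_assoc, twistOp_pow_mul_smul, pow_add, smul_smul]
      rfl

lemma natDegree_skewMul_le (f g : F[X]) :
    (skewMul σ f g).natDegree ≤ f.natDegree + g.natDegree := by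
  refine natDegree_sum_le_of_forall_le _ _ fun j hj => ?_
  exact (natDegree_monomial_mul_map_le _ _ _ _).trans
    (Nat.add_le_add_right (le_natDegree_of_mem_supp j hj) _)

lemma coeff_skewMul_natDegree_add (f g : F[X]) :
    (skewMul σ f g).coeff (f.natDegree + g.natDegree)
      = f.leadingCoeff * (σ ^ f.natDegree) g.leadingCoeff := by
  rw [skewMul, sum_def, finsetSum_coeff, Finset.sum_eq_single f.natDegree]
  · rw [add_comm, coeff_monomial_mul, coeff_map]
    rfl
  · intro j hj hjf
    apply coeff_eq_zero_of_natDegree_lt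
    have := lt_of_le_of_ne (le_natDegree_of_mem_supp j hj) hjf
    have := natDegree_monomial_mul_map_le j (f.coeff j) g ((σ ^ j : F ≃ₐ[K] F) : F →+* F)
    omega
  · intro hf
    rw [notMem_support_iff.mp hf, monomial_zero_right, zero_mul, coeff_zero]

lemma skewMul_ne_zero {f g : F[X]} (hf : f ≠ 0) (hg : g ≠ 0) : skewMul σ f g ≠ 0 := by
  intro h
  have := coeff_skewMul_natDegree_add σ f g
  rw [h, coeff_zero, eq_comm, mul_eq_zero, map_eq_zero_iff _ (AlgEquiv.injective _)] at this
  exact this.elim (leadingCoeff_ne_zero.mpr hf) (leadingCoeff_ne_zero.mpr hg)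

lemma natDegree_skewMul {f g : F[X]} (hf : f ≠ 0) (hg : g ≠ 0) :
    (skewMul σ f g).natDegree = f.natDegree + g.natDegree := by
  refine natDegree_eq_of_le_of_coeff_ne_zero (natDegree_skewMul_le σ f g) ?_
  rw [coeff_skewMul_natDegree_add]
  exact mul_ne_zero (leadingCoeff_ne_zero.mpr hf)
    ((map_ne_zero_iff _ (AlgEquiv.injective _)).mpr (leadingCoeff_ne_zero.mpr hg))

lemma exists_eq_skewMul_X_sub_C_add_C (c : F) (f : F[X]) :
    ∃ g r, f = skewMul σ g (X - C c) + C r := by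
  induction f using Polynomial.induction_on' with
  | add f f' hf hf' =>
    obtain ⟨g, r, rfl⟩ := hf
    obtain ⟨g', r', rfl⟩ := hf'
    exact ⟨g + g', r + r', by rw [skewMul_add_left, C_add]; ring⟩
  | monomial n a =>
    induction n generalizing a with
    | zero => exact ⟨0, a, by simp⟩
    | succ n ih =>
      obtain ⟨g, r, hg⟩ := ih (a * (σ ^ n) c)
      refine ⟨monomial n a + g, r, ?_⟩
      rw [skewMul_add_left, skewMul_monomial_left, add_assoc, ← hg]
      simp [mul_sub, monomial_mul_X, ← monomial_mul_C]

lemma skewEval_C_apply (a r b : F) : skewEval σ a (C r) b = r * b := by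
  simp [← monomial_zero_left]

lemma skewEval_X_sub_C_apply (a c b : F) :
    skewEval σ a (X - C c) b = σ b * a - c * b := by
  simp [← monomial_zero_left, ← monomial_one_one_eq_X]

lemma eq_skewMul_X_sub_C_of_skewEval_eq_zero {a b : F} {f : F[X]} (hb : b ≠ 0)
    (hf : skewEval σ a f b = 0) : ∃ g, f = skewMul σ g (X - C (σ b * a * b⁻¹)) := by
  obtain ⟨g, r, rfl⟩ := exists_eq_skewMul_X_sub_C_add_C σ (σ b * a * b⁻¹) f
  have hroot : skewEval σ a (X - C (σ b * a * b⁻¹)) b = 0 := by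
    rw [skewEval_X_sub_C_apply]; field_simp; ring
  rw [map_add, LinearMap.add_apply, skewEval_skewMul, Module.End.mul_apply, hroot, map_zero,
    zero_add, skewEval_C_apply, mul_eq_zero] at hf
  rw [hf.resolve_right hb, C_0, add_zero]
  exact ⟨g, rfl⟩

lemma finrank_ker_skewEval_X_sub_C_le_one [FiniteDimensional K F]
    (hfix : ∀ x, σ x = x → x ∈ Set.range (algebraMap K F)) {a : F} (ha : a ≠ 0) (c : F) :
    finrank K (LinearMap.ker (skewEval σ a (X - C c))) ≤ 1 := by
  by_cases hbot : LinearMap.ker (skewEval σ a (X - C c)) = ⊥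
  · rw [hbot, finrank_bot]; exact zero_le_one
  obtain ⟨b, hb, hb0⟩ := Submodule.exists_mem_ne_zero_of_ne_bot hbot
  rw [LinearMap.mem_ker, skewEval_X_sub_C_apply, sub_eq_zero] at hb
  have hσb : σ b ≠ 0 := by simpa using hb0
  -- Two roots `b, b'` have a σ-fixed, hence `K`-rational, quotient `b' / b`.
  have hle : LinearMap.ker (skewEval σ a (X - C c)) ≤ K ∙ b := fun b' hb' => by
    rw [LinearMap.mem_ker, skewEval_X_sub_C_apply, sub_eq_zero] at hb'
    have hcross : σ b' * b = b' * σ b := by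
      apply mul_right_cancel₀ ha
      linear_combination b * hb' - b' * hb
    obtain ⟨t, ht⟩ := hfix (b' * b⁻¹) (by
      rw [map_mul, map_inv₀]; field_simp; linear_combination hcross)
    refine Submodule.mem_span_singleton.mpr ⟨t, ?_⟩
    rw [Algebra.smul_def, ht]
    field_simp
  exact (Submodule.finrank_mono hle).trans (finrank_span_singleton hb0).le

lemma ker_skewEval_X_sub_C_eq_bot {a a' b : F} (hb : b ≠ 0) (h : ¬ SConj σ.toRingEquiv a' a) :
    LinearMap.ker (skewEval σ a (X - C (σ b * a' * b⁻¹))) = ⊥ := by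
  refine (Submodule.eq_bot_iff _).mpr fun e he =>
    by_contra fun he0 => h ⟨b * e⁻¹, by simp [hb, he0], ?_⟩
  rw [LinearMap.mem_ker, skewEval_X_sub_C_apply, sub_eq_zero] at he
  have hσe : σ e ≠ 0 := by simpa using he0
  rw [AlgEquiv.coe_ringEquiv, map_mul, map_inv₀]
  field_simp at he ⊢
  linear_combination he

theorem sum_finrank_ker_skewEval_le [FiniteDimensional K F]
    (hfix : ∀ x, σ x = x → x ∈ Set.range (algebraMap K F)) {ι : Type*} [Fintype ι]
    {a : ι → F} (ha0 : ∀ i, a i ≠ 0) (ha : Pairwise fun i j => ¬ SConj σ.toRingEquiv (a i) (a j))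
    {f : F[X]} (hf : f ≠ 0) :
    ∑ i, finrank K (LinearMap.ker (skewEval σ (a i) f)) ≤ f.natDegree := by
  classical
  induction hd : f.natDegree using Nat.strong_induction_on generalizing f with
  | _ d ih =>
  by_cases hroots : ∀ i, LinearMap.ker (skewEval σ (a i) f) = ⊥
  · rw [Finset.sum_eq_zero fun i _ => by rw [hroots i, finrank_bot]]
    exact Nat.zero_le d
  obtain ⟨i₀, hi₀⟩ := not_forall.mp hroots
  obtain ⟨b, hb, hb0⟩ := Submodule.exists_mem_ne_zero_of_ne_bot hi₀
  set c := σ b * a i₀ * b⁻¹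
  obtain ⟨g, rfl⟩ := eq_skewMul_X_sub_C_of_skewEval_eq_zero σ hb0 (LinearMap.mem_ker.mp hb)
  have hg : g ≠ 0 := by rintro rfl; simp at hf
  have hdeg : g.natDegree + 1 = d := by
    rw [← hd, natDegree_skewMul σ hg (X_sub_C_ne_zero c), natDegree_X_sub_C]
  have hlin : ∑ i, finrank K (LinearMap.ker (skewEval σ (a i) (X - C c))) ≤ 1 := by
    rw [Finset.sum_eq_single_of_mem i₀ (Finset.mem_univ _) fun i _ hi => by
      rw [ker_skewEval_X_sub_C_eq_bot σ hb0 (ha (Ne.symm hi)), finrank_bot]]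
    exact finrank_ker_skewEval_X_sub_C_le_one σ hfix (ha0 i₀) c
  calc ∑ i, finrank K (LinearMap.ker (skewEval σ (a i) (skewMul σ g (X - C c))))
      ≤ ∑ i, (finrank K (LinearMap.ker (skewEval σ (a i) g))
          + finrank K (LinearMap.ker (skewEval σ (a i) (X - C c)))) := by
        gcongr with i
        rw [skewEval_skewMul]
        exact finrank_ker_comp_le _ _
    _ ≤ g.natDegree + 1 := by
        rw [Finset.sum_add_distrib]
        exact add_le_add (ih _ (by omega) hg rfl) hlin
    _ = d := hdeg

lemma skewMul_mem_degreeLT {f g : F[X]} {A B : ℕ} (hf : f ∈ degreeLT F A) (hg : g ∈ degreeLT F B) :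
    skewMul σ f g ∈ degreeLT F (A + B - 1) := by
  rcases eq_or_ne f 0 with rfl | hf0
  · simp
  rcases eq_or_ne g 0 with rfl | hg0
  · simp
  rw [mem_degreeLT, ← natDegree_lt_iff_degree_lt hf0] at hf
  rw [mem_degreeLT, ← natDegree_lt_iff_degree_lt hg0] at hg
  rw [mem_degreeLT]
  refine degree_le_natDegree.trans_lt (Nat.cast_lt.mpr ?_)
  have := natDegree_skewMul_le σ f g
  omega

end SkewPolynomial

section Interpolation

variable {K F : Type} [Field K] [Field F] [Algebra K F] (σ : F ≃ₐ[K] F) {s : ℕ}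

noncomputable def interpForm (a : F) (Q : Fin (s + 1) → F[X]) : (Fin (s + 1) → F) →ₗ[K] F :=
  ∑ t, skewEval σ a (Q t) ∘ₗ LinearMap.proj t

lemma exists_interpForm_eq_zero [FiniteDimensional K F] {ι : Type*} [Fintype ι] (a : ι → F)
    (V : ι → Submodule K (Fin (s + 1) → F)) (w : Fin (s + 1) → ℕ)
    (hw : ∑ i, finrank K (V i) < ∑ t, w t) :
    ∃ Q : Fin (s + 1) → F[X], Q ≠ 0 ∧ (∀ t, Q t ∈ degreeLT F (w t)) ∧
      ∀ i, ∀ v ∈ V i, interpForm σ (a i) Q v = 0 := by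
  let Φ : ((t : Fin (s + 1)) → degreeLT F (w t)) →ₗ[F] ((i : ι) → V i →ₗ[K] F) :=
    { toFun := fun Q i => interpForm σ (a i) (fun t => Q t) ∘ₗ (V i).subtype
      map_add' := fun Q Q' => by ext; simp [interpForm, Finset.sum_add_distrib]
      map_smul' := fun c Q => by ext; simp [interpForm, Finset.mul_sum] }
  -- `V i →ₗ[K] F` has `F`-dimension `finrank K (V i)`, so `Φ` has a nonzero kernel.
  have hrank : finrank F ((i : ι) → V i →ₗ[K] F)
      < finrank F ((t : Fin (s + 1)) → degreeLT F (w t)) := by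
    simpa [Module.finrank_pi_fintype, Module.finrank_linearMap_self,
      finrank_eq_card_basis (degreeLT.basis F _)] using hw
  obtain ⟨Q, hQ, hQ0⟩ :=
    Submodule.exists_mem_ne_zero_of_ne_bot (LinearMap.ker_ne_bot_of_finrank_lt hrank)
  refine ⟨fun t => Q t, fun h => hQ0 (funext fun t => Subtype.ext (congrFun h t)), fun t => (Q t).2,
    fun i v hv => ?_⟩
  exact LinearMap.congr_fun (congrFun ((LinearMap.mem_ker (f := Φ)).mp hQ) i) ⟨v, hv⟩

variable [DecidableEq F]

noncomputable def interpPoly {k : ℕ} (Q : Fin (s + 1) → F[X]) (M : Matrix (Fin s) (Fin k) F) :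
    F[X] :=
  Q 0 + ∑ r, skewMul σ (Q r.succ) (ofFn k (M r))

noncomputable def liftMap (a : F) {k : ℕ} (M : Matrix (Fin s) (Fin k) F) :
    F →ₗ[K] (Fin (s + 1) → F) :=
  LinearMap.pi (Fin.cons LinearMap.id fun r => skewEval σ a (ofFn k (M r)))

lemma liftMap_apply (a : F) {k : ℕ} (M : Matrix (Fin s) (Fin k) F) (b : F) :
    liftMap σ a M b = Fin.cons b fun r => skewEval σ a (ofFn k (M r)) b := by
  ext t
  cases t using Fin.cases <;> rfl

lemma interpForm_liftMap (a : F) {k : ℕ} (Q : Fin (s + 1) → F[X]) (M : Matrix (Fin s) (Fin k) F)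
    (b : F) : interpForm σ a Q (liftMap σ a M b) = skewEval σ a (interpPoly σ Q M) b := by
  simp [interpForm, interpPoly, liftMap_apply, Fin.sum_univ_succ, skewEval_skewMul]

lemma interpPoly_mem_degreeLT {k d : ℕ} (hk : 1 ≤ k) (hkd : k ≤ d) {Q : Fin (s + 1) → F[X]}
    (hQ0 : Q 0 ∈ degreeLT F d) (hQ : ∀ r : Fin s, Q r.succ ∈ degreeLT F (d + 1 - k))
    (M : Matrix (Fin s) (Fin k) F) : interpPoly σ Q M ∈ degreeLT F d := by
  refine add_mem hQ0 (sum_mem fun r _ => ?_)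
  have := skewMul_mem_degreeLT σ (hQ r) (mem_degreeLT.mpr (ofFn_degree_lt (M r)))
  rwa [show d + 1 - k + k - 1 = d by omega] at this

lemma finrank_le_finrank_ker_interpPoly [FiniteDimensional K F] {a : F} {k : ℕ}
    {Q : Fin (s + 1) → F[X]} {M : Matrix (Fin s) (Fin k) F} {V W : Submodule K (Fin (s + 1) → F)}
    (hQ : ∀ v ∈ V, interpForm σ a Q v = 0) (hWV : W ≤ V)
    (hW : W ≤ LinearMap.range (liftMap σ a M)) :
    finrank K W ≤ finrank K (LinearMap.ker (skewEval σ a (interpPoly σ Q M))) := by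
  have hcomap : W.comap (liftMap σ a M) ≤ LinearMap.ker (skewEval σ a (interpPoly σ Q M)) :=
    fun b hb => by rw [LinearMap.mem_ker, ← interpForm_liftMap]; exact hQ _ (hWV hb)
  calc finrank K W = finrank K ((W.comap (liftMap σ a M)).map (liftMap σ a M)) := by
        rw [Submodule.map_comap_eq, inf_eq_right.mpr hW]
    _ ≤ finrank K (W.comap (liftMap σ a M)) := Submodule.finrank_map_le _ _
    _ ≤ _ := Submodule.finrank_mono hcomap

lemma interpPoly_sub_interpPoly {k : ℕ} (Q : Fin (s + 1) → F[X]) {M M' : Matrix (Fin s) (Fin k) F}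
    {r : Fin s} (h : ∀ r' ≠ r, M r' = M' r') :
    interpPoly σ Q M - interpPoly σ Q M' = skewMul σ (Q r.succ) (ofFn k (M r - M' r)) := by
  rw [interpPoly, interpPoly, add_sub_add_left_eq_sub, ← Finset.sum_sub_distrib,
    Finset.sum_eq_single r fun r' _ hr' => by rw [h r' hr', sub_self], map_sub,
    skewMul_sub_right]
  exact fun hr => absurd (Finset.mem_univ r) hr

lemma card_le_of_interpPoly_eq_zero [Fintype F] {k : ℕ} {Q : Fin (s + 1) → F[X]} (hQ : Q ≠ 0)
    (S : Set (Matrix (Fin s) (Fin k) F)) (hS : ∀ M ∈ S, interpPoly σ Q M = 0) :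
    Nat.card S ≤ Fintype.card F ^ (k * (s - 1)) := by
  rcases S.eq_empty_or_nonempty with rfl | ⟨M₀, hM₀⟩
  · simp
  obtain ⟨r, hr⟩ : ∃ r : Fin s, Q r.succ ≠ 0 := by
    by_contra! h
    refine hQ (funext fun t => Fin.cases ?_ h t)
    simpa [interpPoly, h] using hS M₀ hM₀
  have hinj : Function.Injective fun (M : S) (r' : {r' // r' ≠ r}) => M.1 r'.1 := by
    rintro ⟨M, hM⟩ ⟨M', hM'⟩ hMM'
    have hoff : ∀ r' ≠ r, M r' = M' r' := fun r' hr' => congrFun hMM' ⟨r', hr'⟩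
    have hrow : ofFn k (M r - M' r) = 0 := by
      by_contra hne
      apply skewMul_ne_zero σ hr hne
      rw [← interpPoly_sub_interpPoly σ Q hoff, hS M hM, hS M' hM', sub_self]
    refine Subtype.ext (funext fun r' => ?_)
    by_cases hr' : r' = r
    · subst hr'
      exact sub_eq_zero.mp ((map_eq_zero_iff _ (injective_ofFn k)).mp hrow)
    · exact hoff r' hr'
  calc Nat.card S ≤ Nat.card ({r' // r' ≠ r} → Fin k → F) := Nat.card_le_card_of_injective _ hinj
    _ = Fintype.card F ^ (k * (s - 1)) := by
      simp [Nat.card_eq_fintype_card, Fintype.card_subtype_compl, ← pow_mul]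

end Interpolation

section LiftedCodeword

variable {K F : Type} [Field K] [Field F] [Algebra K F] (σ : F ≃ₐ[K] F)
  {ℓ : ℕ} {nn : Fin ℓ → ℕ} (aa : Fin ℓ → F) (β : (Σ i : Fin ℓ, Fin (nn i)) → F) {s k : ℕ}

lemma opev_eq_twistOp_pow (a b : F) (j : ℕ) : opev σ.toRingEquiv a b j = (twistOp σ a ^ j) b := by
  induction j generalizing b with
  | zero => simp [opev, genNorm]
  | succ j ih =>
    rw [pow_succ, Module.End.mul_apply, ← ih]
    simp only [opev, genNorm, AlgEquiv.coe_ringEquiv, ← AlgEquiv.coe_pow,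
      Function.iterate_succ_apply, twistOp_apply, map_mul]
    ring

lemma finrank_liftSp {i : Fin ℓ} (hβ : LinearIndependent K fun μ : Fin (nn i) => β ⟨i, μ⟩)
    (M : Matrix (Fin s) (Fin k) F) : finrank K (liftSp K σ.toRingEquiv nn aa β k M i) = nn i := by
  rw [liftSp, finrank_span_eq_card, Fintype.card_fin]
  exact LinearIndependent.of_comp (LinearMap.proj 0) hβ

variable [DecidableEq F]

lemma codeword_eq_skewEval (M : Matrix (Fin s) (Fin k) F) (r : Fin s) (p : Σ i, Fin (nn i)) :
    codeword σ.toRingEquiv nn aa β k M r p = skewEval σ (aa p.1) (ofFn k (M r)) (β p) := by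
  simp [codeword, moore, Matrix.mul_apply, ofFn_eq_sum_monomial, opev_eq_twistOp_pow]

lemma liftSp_le_range (M : Matrix (Fin s) (Fin k) F) (i : Fin ℓ) :
    liftSp K σ.toRingEquiv nn aa β k M i ≤ LinearMap.range (liftMap σ (aa i) M) := by
  rw [liftSp, Submodule.span_le]
  rintro _ ⟨μ, rfl⟩
  exact ⟨β ⟨i, μ⟩, by simp [liftMap_apply, codeword_eq_skewEval]⟩

theorem interpPoly_eq_zero_of_isReachable [FiniteDimensional K F]
    (hfix : ∀ x, σ x = x → x ∈ Set.range (algebraMap K F)) (ha0 : ∀ i, aa i ≠ 0)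
    (haconj : Pairwise fun i j => ¬ SConj σ.toRingEquiv (aa i) (aa j))
    (hβ : ∀ i, LinearIndependent K fun μ : Fin (nn i) => β ⟨i, μ⟩)
    {Q : Fin (s + 1) → F[X]} {V : Fin ℓ → Submodule K (Fin (s + 1) → F)}
    (hQ : ∀ i, ∀ v ∈ V i, interpForm σ (aa i) Q v = 0) {γ δ : ℕ} {M : Matrix (Fin s) (Fin k) F}
    (hM : IsReachable (liftSp K σ.toRingEquiv nn aa β k M) V γ δ)
    (hdeg : interpPoly σ Q M ∈ degreeLT F (∑ i, nn i - δ)) :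
    interpPoly σ Q M = 0 := by
  obtain ⟨W, E', hWU, -, hV, hδ, -⟩ := hM
  by_contra hP
  have hW := sum_finrank_add_eq_of_le hWU hδ
  simp only [finrank_liftSp σ aa β (hβ _)] at hW
  have hroots := sum_finrank_ker_skewEval_le σ hfix ha0 haconj hP
  have hnat := (natDegree_lt_iff_degree_lt hP).mpr (mem_degreeLT.mp hdeg)
  have hWker : ∑ i, finrank K (W i)
      ≤ ∑ i, finrank K (LinearMap.ker (skewEval σ (aa i) (interpPoly σ Q M))) :=
    Finset.sum_le_sum fun i _ => finrank_le_finrank_ker_interpPoly σ (hQ i)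
      ((hV i).symm ▸ le_sup_left) ((hWU i).trans (liftSp_le_range σ aa β M i))
  omega

end LiftedCodeword

theorem LILRS_list_size_le_general
    {K F : Type} [Field K] [Field F] [Algebra K F] [Fintype K] [Fintype F]
    (σ : F ≃+* F)
    (hfix : ∀ x : F, σ x = x ↔ x ∈ Set.range (algebraMap K F))
    {q m : ℕ} (hq : Fintype.card K = q) (hm : Module.finrank K F = m)
    {ℓ : ℕ} (nn : Fin ℓ → ℕ) (aa : Fin ℓ → F)
    (ha0 : ∀ i, aa i ≠ 0)
    (haconj : ∀ i j : Fin ℓ, i ≠ j → ¬ SConj σ (aa i) (aa j))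
    (β : (Σ i : Fin ℓ, Fin (nn i)) → F)
    (hβ : ∀ i, LinearIndependent K fun μ : Fin (nn i) => β ⟨i, μ⟩)
    {s : ℕ} {k n : ℕ} (hn : n = ∑ i, nn i)
    (hk : 1 ≤ k) (hkn : k ≤ n)
    (γ δ : ℕ) (hγδ : γ + s * δ < s * (n - k + 1)) :
    ∀ V : (i : Fin ℓ) → Submodule K (Fin (s + 1) → F),
      Nat.card {M : Matrix (Fin s) (Fin k) F //
          ∃ W E : (i : Fin ℓ) → Submodule K (Fin (s + 1) → F),
            (∀ i, W i ≤ liftSp K σ nn aa β k M i) ∧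
            (∀ i, W i ⊓ E i = ⊥) ∧
            (∀ i, V i = W i ⊔ E i) ∧
            (∑ i, (Module.finrank K ↥(liftSp K σ nn aa β k M i)
                - Module.finrank K ↥(W i))) = δ ∧
            (∑ i, Module.finrank K ↥(E i)) = γ}
        ≤ q ^ (m * k * (s - 1)) := by
  classical
  obtain ⟨σ, rfl⟩ : ∃ σ' : F ≃ₐ[K] F, σ'.toRingEquiv = σ :=
    ⟨AlgEquiv.ofRingEquiv (f := σ) fun c => (hfix _).2 ⟨c, rfl⟩, rfl⟩
  intro V
  set S := {M | IsReachable (liftSp K σ.toRingEquiv nn aa β k M) V γ δ}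
  change Nat.card S ≤ _
  rcases S.eq_empty_or_nonempty with hS | ⟨M₀, hM₀⟩
  · simp [hS]
  have hδ : δ ≤ n - k := by
    by_contra! h
    have := Nat.mul_le_mul_left s (show n - k + 1 ≤ δ by omega)
    omega
  have hV := hM₀.sum_finrank_add
  simp only [finrank_liftSp σ aa β (hβ _), ← hn] at hV
  have hw : ∑ i, finrank K (V i)
      < ∑ t, (Fin.cons (n - δ) fun _ => n - δ + 1 - k : Fin (s + 1) → ℕ) t := by
    have : s * (n - δ + 1 - k) + s * δ = s * (n - k + 1) := by rw [← mul_add]; congr 1; omega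
    simp only [Fin.sum_cons, Finset.sum_const, Finset.card_univ, Fintype.card_fin, smul_eq_mul]
    omega
  obtain ⟨Q, hQ0, hQdeg, hQV⟩ := exists_interpForm_eq_zero σ aa V _ hw
  have hdeg (M : Matrix (Fin s) (Fin k) F) : interpPoly σ Q M ∈ degreeLT F (∑ i, nn i - δ) :=
    hn ▸ interpPoly_mem_degreeLT σ (d := n - δ) hk (by omega) (hQdeg 0) (hQdeg ·.succ) M
  have hcard := card_le_of_interpPoly_eq_zero σ hQ0 S fun M hM =>
    interpPoly_eq_zero_of_isReachable σ aa β (fun x => (hfix x).1) ha0 (haconj · ·) hβ hQV hM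
      (hdeg M)
  rwa [Module.card_eq_pow_finrank (K := K), hq, hm, ← pow_mul, ← mul_assoc] at hcard

/-- List size of lifted ILRS list decoding.
If `γ + s·δ < s·(n − k + 1)`, then for every tuple `V` of `GF(q)`-subspaces of
`F^{s+1}` the number of `M ∈ F^{s×k}` whose lifted codeword tuple `U(M)` is
`(γ, δ)`-reachable from `V` is at most `q^{m·k·(s−1)}`. -/
theorem LILRS_list_size_le
    {K F : Type} [Field K] [Field F] [Algebra K F] [Fintype K] [Fintype F]
    (σ : F ≃+* F)
    (hfix : ∀ x : F, σ x = x ↔ x ∈ Set.range (algebraMap K F))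
    {q m : ℕ} (hq : Fintype.card K = q) (hm : Module.finrank K F = m)
    {ℓ : ℕ} (hℓ : 1 ≤ ℓ) (nn : Fin ℓ → ℕ) (aa : Fin ℓ → F)
    (ha0 : ∀ i, aa i ≠ 0)
    (haconj : ∀ i j : Fin ℓ, i ≠ j → ¬ SConj σ (aa i) (aa j))
    (β : (Σ i : Fin ℓ, Fin (nn i)) → F)
    (hβ : ∀ i, LinearIndependent K fun μ : Fin (nn i) => β ⟨i, μ⟩)
    {s : ℕ} (hs : 1 ≤ s) {k n : ℕ} (hn : n = ∑ i, nn i)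
    (hk : 1 ≤ k) (hkn : k ≤ n)
    (γ δ : ℕ) (hγδ : γ + s * δ < s * (n - k + 1)) :
    ∀ V : (i : Fin ℓ) → Submodule K (Fin (s + 1) → F),
      Nat.card {M : Matrix (Fin s) (Fin k) F //
          ∃ W E : (i : Fin ℓ) → Submodule K (Fin (s + 1) → F),
            (∀ i, W i ≤ liftSp K σ nn aa β k M i) ∧
            (∀ i, W i ⊓ E i = ⊥) ∧
            (∀ i, V i = W i ⊔ E i) ∧
            (∑ i, (Module.finrank K ↥(liftSp K σ nn aa β k M i)
                - Module.finrank K ↥(W i))) = δ ∧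
            (∑ i, Module.finrank K ↥(E i)) = γ}
        ≤ q ^ (m * k * (s - 1)) :=
  LILRS_list_size_le_general σ hfix hq hm nn aa ha0 haconj β hβ hn hk hkn γ δ hγδ

end Stmt17
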